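/- arXiv:math/0701534 — 3 statements merged into one kernel-verified Lean document; each statement's English description precedes it below -/
import Mathlib

section
/- Let (X, d, μ) be an mm-space with m := μ(X), and suppose that the support of μ is connected. Then for every κ > 0, diam(X ⟶_{Lip₁} ℝ, m − κ) ≥ Sep(X; κ, κ). -/
open MeasureTheory Metric Filter ENNReal

/-- Distance between two subsets of a (pseudo-e)metric space. -/
noncomputable def setEDist {α : Type*} [PseudoEMetricSpace α] (A B : Set α) : ℝ≥0∞ :=
  ⨅ (a ∈ A) (b ∈ B), edist a b

/-- Partial diameter of a measure: infimum of diameters of Borel sets of measure at least `a`. -/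
noncomputable def partialDiam {Y : Type*} [PseudoEMetricSpace Y] [MeasurableSpace Y]
    (ν : Measure Y) (a : ℝ≥0∞) : ℝ≥0∞ :=
  ⨅ (s : Set Y) (_ : MeasurableSet s) (_ : a ≤ ν s), EMetric.diam s

/-- Observable diameter `diam (X ⟶_{Lip₁} Y, m - κ)` of an mm-space `(X, μ)` with screen `Y`. -/
noncomputable def obsDiam {X : Type*} [PseudoMetricSpace X] [MeasurableSpace X]
    (Y : Type*) [PseudoMetricSpace Y] [MeasurableSpace Y]
    (μ : Measure X) (κ : ℝ) : ℝ≥0∞ :=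
  ⨆ (f : X → Y) (_ : LipschitzWith 1 f),
    partialDiam (Measure.map f μ) (μ Set.univ - ENNReal.ofReal κ)

/-- Separation distance `Sep (X; κ₀, κ₁)`. -/
noncomputable def sep {X : Type*} [PseudoMetricSpace X] [MeasurableSpace X]
    (μ : Measure X) (κ₀ κ₁ : ℝ) : ℝ≥0∞ :=
  ⨆ (A : Set X) (B : Set X) (_ : MeasurableSet A) (_ : MeasurableSet B)
    (_ : ENNReal.ofReal κ₀ ≤ μ A) (_ : ENNReal.ofReal κ₁ ≤ μ B), setEDist A B

/-- The support of a Borel measure: points all of whose open neighbourhoods have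
positive measure. -/
def measureSupport {X : Type*} [TopologicalSpace X] [MeasurableSpace X] (μ : Measure X) :
    Set X :=
  {x | ∀ U : Set X, IsOpen U → x ∈ U → 0 < μ U}

/-- In a second countable space, the complement of the support of a measure is null. -/
lemma measure_compl_measureSupport {X : Type*} [TopologicalSpace X]
    [SecondCountableTopology X] [MeasurableSpace X] (μ : Measure X) :
    μ (measureSupport μ)ᶜ = 0 := by
  have hset : (measureSupport μ)ᶜ = ⋃₀ {U : Set X | IsOpen U ∧ μ U = 0} := by
    ext x
    simp only [Set.mem_compl_iff, measureSupport, Set.mem_setOf_eq, Set.mem_sUnion]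
    constructor
    · intro hx
      push_neg at hx
      obtain ⟨U, hUo, hxU, hU0⟩ := hx
      exact ⟨U, ⟨hUo, le_antisymm hU0 zero_le⟩, hxU⟩
    · rintro ⟨U, ⟨hUo, hU0⟩, hxU⟩ hx
      exact absurd hU0 (hx U hUo hxU).ne'
  obtain ⟨T, hTc, hTsub, hTeq⟩ :=
    TopologicalSpace.isOpen_sUnion_countable {U : Set X | IsOpen U ∧ μ U = 0}
      (fun s hs => hs.1)
  rw [hset, ← hTeq]
  exact (measure_sUnion_null_iff hTc).2 fun s hs => (hTsub hs).2

/-- If the support of `μ` is connected, then `diam (X ⟶_{Lip₁} ℝ, m - κ) ≥ Sep (X; κ, κ)`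
for every `κ > 0`. -/
theorem sep_le_obsDiam_of_connected_support
    {X : Type*} [MetricSpace X] [CompleteSpace X] [TopologicalSpace.SeparableSpace X]
    [MeasurableSpace X] [BorelSpace X]
    (μ : Measure X) [IsFiniteMeasure μ]
    (hconn : IsConnected (measureSupport μ))
    (κ : ℝ) (hκ : 0 < κ) :
    sep μ κ κ ≤ obsDiam ℝ μ κ := by
  have _inst : SecondCountableTopology X :=
    UniformSpace.secondCountable_of_separable X
  rw [sep]
  refine iSup_le fun A => iSup_le fun B => iSup_le fun hA => iSup_le fun hB =>
    iSup_le fun hμA => iSup_le fun hμB => ?_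
  rcases eq_or_ne (setEDist A B) 0 with h0 | h0
  · rw [h0]; exact zero_le
  have hκ0 : (0 : ℝ≥0∞) < ENNReal.ofReal κ := ENNReal.ofReal_pos.2 hκ
  have hAne : A.Nonempty := by
    by_contra h
    rw [Set.not_nonempty_iff_eq_empty] at h
    rw [h, measure_empty] at hμA
    exact hκ0.not_ge hμA
  have hBne : B.Nonempty := by
    by_contra h
    rw [Set.not_nonempty_iff_eq_empty] at h
    rw [h, measure_empty] at hμB
    exact hκ0.not_ge hμB
  have hedist_le : ∀ a ∈ A, ∀ b ∈ B, setEDist A B ≤ edist a b := fun a ha b hb =>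
    iInf₂_le_of_le a ha (iInf₂_le b hb)
  have hD'lt : setEDist A B < ⊤ := by
    obtain ⟨a, ha⟩ := hAne
    obtain ⟨b, hb⟩ := hBne
    exact lt_of_le_of_lt (hedist_le a ha b hb) (edist_lt_top a b)
  set D : ℝ := (setEDist A B).toReal with hD
  have hDpos : 0 < D := ENNReal.toReal_pos h0 hD'lt.ne
  set f : X → ℝ := fun x => infDist x A with hfdef
  have hf : LipschitzWith 1 f := lipschitz_infDist_pt A
  have hmeas_f : Measurable f := hf.continuous.measurable
  set ν : Measure ℝ := Measure.map f μ with hν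
  have hmap : ∀ t : Set ℝ, MeasurableSet t → ν t = μ (f ⁻¹' t) := fun t ht =>
    Measure.map_apply hmeas_f ht
  -- key estimate
  have key : setEDist A B ≤ partialDiam ν (μ Set.univ - ENNReal.ofReal κ) := by
    rw [partialDiam]
    refine le_iInf fun s => le_iInf fun hs => le_iInf fun hνs => ?_
    by_contra hcon
    push_neg at hcon
    -- basic measure facts
    have hν0 : ENNReal.ofReal κ ≤ ν (Set.Iic 0) := by
      rw [hmap _ measurableSet_Iic]
      refine hμA.trans (measure_mono fun a ha => ?_)
      simp only [Set.mem_preimage, Set.mem_Iic, hfdef]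
      rw [infDist_zero_of_mem ha]
    have hνD : ENNReal.ofReal κ ≤ ν (Set.Ici D) := by
      rw [hmap _ measurableSet_Ici]
      refine hμB.trans (measure_mono fun b hb => ?_)
      simp only [Set.mem_preimage, Set.mem_Ici, hfdef]
      exact ENNReal.toReal_mono (infEdist_ne_top hAne)
        (EMetric.le_infEdist.2 fun a ha => (edist_comm b a ▸ hedist_le a ha b hb))
    -- intermediate value theorem on the support
    have hμcompl : μ (measureSupport μ)ᶜ = 0 := measure_compl_measureSupport μ
    have hAK : (A ∩ measureSupport μ).Nonempty := by
      by_contra h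
      rw [Set.not_nonempty_iff_eq_empty] at h
      have hAsub : A ⊆ (measureSupport μ)ᶜ := fun x hx hxK =>
        Set.eq_empty_iff_forall_notMem.1 h x ⟨hx, hxK⟩
      exact hκ0.not_ge (hμA.trans ((measure_mono hAsub).trans_eq hμcompl))
    have hBK : (B ∩ measureSupport μ).Nonempty := by
      by_contra h
      rw [Set.not_nonempty_iff_eq_empty] at h
      have hBsub : B ⊆ (measureSupport μ)ᶜ := fun x hx hxK =>
        Set.eq_empty_iff_forall_notMem.1 h x ⟨hx, hxK⟩
      exact hκ0.not_ge (hμB.trans ((measure_mono hBsub).trans_eq hμcompl))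
    obtain ⟨a₀, ha₀A, ha₀K⟩ := hAK
    obtain ⟨b₀, hb₀B, hb₀K⟩ := hBK
    have hIoo : Set.Ioo (0 : ℝ) D ⊆ f '' measureSupport μ := by
      have himg : IsPreconnected (f '' measureSupport μ) :=
        (hconn.image f hf.continuous.continuousOn).isPreconnected
      have hord : Set.OrdConnected (f '' measureSupport μ) := himg.ordConnected
      have hfa₀ : f a₀ = 0 := infDist_zero_of_mem ha₀A
      have hfb₀ : D ≤ f b₀ :=
        ENNReal.toReal_mono (infEdist_ne_top hAne)
          (EMetric.le_infEdist.2 fun a ha => (edist_comm b₀ a ▸ hedist_le a ha b₀ hb₀B))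
      intro t ht
      refine hord.out ⟨a₀, ha₀K, hfa₀⟩ ⟨b₀, hb₀K, rfl⟩ ?_
      exact ⟨hfa₀ ▸ ht.1.le, ht.2.le.trans hfb₀⟩
    have hUpos : ∀ U : Set ℝ, IsOpen U → ∀ t ∈ U, t ∈ Set.Ioo (0 : ℝ) D → 0 < ν U := by
      intro U hUo t htU htI
      obtain ⟨x, hxK, hfx⟩ := hIoo htI
      rw [hmap U hUo.measurableSet]
      refine hxK _ (hUo.preimage hf.continuous) ?_
      simp only [Set.mem_preimage]
      rw [hfx]
      exact htU
    -- cancellation lemma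
    have hν_univ : ν Set.univ = μ Set.univ := by
      rw [hmap _ MeasurableSet.univ, Set.preimage_univ]
    have cancel : ∀ U V : Set ℝ, MeasurableSet U → MeasurableSet V →
        Disjoint s U → Disjoint V U → Disjoint s V → ENNReal.ofReal κ ≤ ν V → ν U = 0 := by
      intro U V hU hV hsU hVU hsV hκV
      have h1 : ν s + ν V + ν U ≤ ν Set.univ := by
        calc ν s + ν V + ν U = ν ((s ∪ V) ∪ U) := by
              rw [measure_union (Set.disjoint_union_left.2 ⟨hsU, hVU⟩) hU,
                measure_union hsV hV]
          _ ≤ ν Set.univ := measure_mono (Set.subset_univ _)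
      have h2 : ν Set.univ ≤ ν s + ENNReal.ofReal κ := by
        rw [hν_univ]
        exact tsub_le_iff_right.1 hνs
      have h3 : (ν s + ENNReal.ofReal κ) + ν U ≤ (ν s + ENNReal.ofReal κ) + 0 := by
        rw [add_zero]
        refine le_trans (add_le_add_left (add_le_add_right hκV _) _) (h1.trans h2)
      have hfin : ν s + ENNReal.ofReal κ ≠ ⊤ := by
        refine ENNReal.add_ne_top.2 ⟨?_, ENNReal.ofReal_ne_top⟩
        rw [hmap s hs]
        exact (measure_lt_top μ _).ne
      have := ENNReal.le_of_add_le_add_left hfin h3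
      simpa using this
    rcases s.eq_empty_or_nonempty with rfl | hsne
    · -- empty case
      have hz := cancel (Set.Ioo 0 D) (Set.Iic 0) measurableSet_Ioo measurableSet_Iic
        (Set.disjoint_left.2 (by simp)) 
        (Set.disjoint_left.2 fun x hx hx' => (hx'.1.not_ge hx))
        (Set.disjoint_left.2 (by simp)) hν0
      have hp := hUpos (Set.Ioo 0 D) isOpen_Ioo (D / 2)
        ⟨half_pos hDpos, half_lt_self hDpos⟩ ⟨half_pos hDpos, half_lt_self hDpos⟩
      exact hp.ne' hz
    · have hbdd : Bornology.IsBounded s :=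
        Metric.isBounded_iff_ediam_ne_top.2 (hcon.trans hD'lt).ne
      set a : ℝ := sInf s with ha
      set b : ℝ := sSup s with hb
      have hmem : ∀ x ∈ s, a ≤ x ∧ x ≤ b := fun x hx =>
        ⟨csInf_le hbdd.bddBelow hx, le_csSup hbdd.bddAbove hx⟩
      have hba : b ≤ a + Metric.diam s := by
        refine csSup_le hsne fun x hx => ?_
        have hxa : x - Metric.diam s ≤ a := by
          refine le_csInf hsne fun y hy => ?_
          have hd := Metric.dist_le_diam_of_mem hbdd hx hy
          rw [Real.dist_eq] at hd
          have := abs_le.1 hd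
          linarith [this.2]
        linarith
      have hdiam_lt : Metric.diam s < D := by
        rw [Metric.diam, hD]
        exact (ENNReal.toReal_lt_toReal (hcon.trans hD'lt).ne hD'lt.ne).2 hcon
      have hdiam_nonneg : (0 : ℝ) ≤ Metric.diam s := Metric.diam_nonneg
      have hcases : 0 < a ∨ b < D := by
        by_contra h
        push_neg at h
        linarith [h.1, h.2, hba, hdiam_lt]
      rcases hcases with hc | hc
      · -- gap below s
        set t : ℝ := min a D / 2 with ht
        have htpos : 0 < min a D / 2 := half_pos (lt_min hc hDpos)
        have htlt : min a D / 2 < min a D := half_lt_self (lt_min hc hDpos)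
        have hz := cancel (Set.Ioo 0 (min a D)) (Set.Iic 0) measurableSet_Ioo measurableSet_Iic
          (Set.disjoint_left.2 fun x hx hx' =>
            (hx'.2.trans_le (min_le_left a D)).not_ge (hmem x hx).1)
          (Set.disjoint_left.2 fun x hx hx' => (hx'.1.not_ge hx))
          (Set.disjoint_left.2 fun x hx hx' => ((hmem x hx).1.trans_lt' hc).not_ge hx')
          hν0
        have hp := hUpos (Set.Ioo 0 (min a D)) isOpen_Ioo (min a D / 2)
          ⟨htpos, htlt⟩ ⟨htpos, htlt.trans_le (min_le_right a D)⟩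
        exact hp.ne' hz
      · -- gap above s
        have hmaxlt : max b 0 < D := max_lt hc hDpos
        set t : ℝ := (max b 0 + D) / 2 with ht
        have ht1 : max b 0 < t := by rw [ht]; linarith
        have ht2 : t < D := by rw [ht]; linarith
        have ht0 : 0 < t := lt_of_le_of_lt (le_max_right b 0) ht1
        have hz := cancel (Set.Ioo (max b 0) D) (Set.Ici D) measurableSet_Ioo measurableSet_Ici
          (Set.disjoint_left.2 fun x hx hx' =>
            ((hmem x hx).2.trans (le_max_left b 0)).not_gt hx'.1)
          (Set.disjoint_left.2 fun x hx hx' => hx'.2.not_ge hx)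
          (Set.disjoint_left.2 fun x hx hx' => ((hmem x hx).2.trans_lt hc).not_ge hx')
          hνD
        have hp := hUpos (Set.Ioo (max b 0) D) isOpen_Ioo t ⟨ht1, ht2⟩ ⟨ht0, ht2⟩
        exact hp.ne' hz
  calc setEDist A B ≤ partialDiam ν (μ Set.univ - ENNReal.ofReal κ) := key
    _ ≤ obsDiam ℝ μ κ := by
      rw [obsDiam]
      exact le_iSup₂_of_le f hf le_rfl
end

section
/- Let (X, d, μ) be an mm-space with m := μ(X). Then for every κ > 0, Sep(X; κ, κ) ≥ diam(X ⟶_{Lip₁} ℝ, m − 2κ). -/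
open MeasureTheory Metric Filter ENNReal

/-- `Sep (X; κ, κ) ≥ diam (X ⟶_{Lip₁} ℝ, m - 2κ)` for every `κ > 0`. -/
theorem obsDiam_le_sep
    {X : Type*} [MetricSpace X] [CompleteSpace X] [TopologicalSpace.SeparableSpace X]
    [MeasurableSpace X] [BorelSpace X]
    (μ : Measure X) [IsFiniteMeasure μ] (κ : ℝ) (hκ : 0 < κ) :
    obsDiam ℝ μ (2 * κ) ≤ sep μ κ κ := by
  unfold obsDiam
  refine iSup₂_le fun f hf => ?_
  set m := μ Set.univ with hm
  by_cases hsmall : m ≤ ENNReal.ofReal (2 * κ)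
  · have h0 : m - ENNReal.ofReal (2 * κ) = 0 := tsub_eq_zero_of_le hsmall
    rw [h0]
    calc partialDiam (Measure.map f μ) 0 ≤ EMetric.diam (∅ : Set ℝ) :=
          iInf_le_of_le ∅ (iInf_le_of_le MeasurableSet.empty (iInf_le_of_le zero_le le_rfl))
      _ = 0 := EMetric.diam_empty
      _ ≤ _ := zero_le
  push_neg at hsmall
  have hfm : Measurable f := hf.continuous.measurable
  set ν := Measure.map f μ with hν
  have hνs : ∀ s : Set ℝ, MeasurableSet s → ν s = μ (f ⁻¹' s) := fun s hs =>
    Measure.map_apply hfm hs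
  have hνuniv : ν Set.univ = m := by rw [hνs _ MeasurableSet.univ, Set.preimage_univ]
  have hνfin : ∀ s : Set ℝ, ν s ≠ ∞ := fun s =>
    ne_top_of_le_ne_top (by rw [hνuniv]; exact measure_ne_top μ _)
      (measure_mono (Set.subset_univ s))
  have hκm : ENNReal.ofReal κ < m :=
    lt_of_le_of_lt (ENNReal.ofReal_le_ofReal (by linarith)) hsmall
  -- the lower quantile
  set S : Set ℝ := {t | ENNReal.ofReal κ ≤ ν (Set.Iic t)} with hS
  have hSne : S.Nonempty := by
    obtain ⟨t, ht⟩ := ((tendsto_measure_Iic_atTop ν).eventually_const_lt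
      (hνuniv ▸ hκm)).exists
    exact ⟨t, ht.le⟩
  have hSbdd : BddBelow S := by
    have hempty : (⋂ n : ℕ, Set.Iic (-(n : ℝ))) = ∅ := by
      ext x
      simp only [Set.mem_iInter, Set.mem_Iic, Set.mem_empty_iff_false, iff_false, not_forall]
      obtain ⟨n, hn⟩ := exists_nat_gt (-x)
      exact ⟨n, by push_neg; linarith⟩
    have hanti : Antitone fun n : ℕ => Set.Iic (-(n : ℝ)) := fun n k h =>
      Set.Iic_subset_Iic.2 (by exact_mod_cast neg_le_neg (Nat.cast_le.2 h))
    have h0 : (⨅ n : ℕ, ν (Set.Iic (-(n : ℝ)))) = 0 := by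
      rw [← hanti.measure_iInter (fun n => (measurableSet_Iic).nullMeasurableSet)
        ⟨0, hνfin _⟩, hempty, measure_empty]
    have : (⨅ n : ℕ, ν (Set.Iic (-(n : ℝ)))) < ENNReal.ofReal κ := by
      rw [h0]; exact ENNReal.ofReal_pos.2 hκ
    obtain ⟨n, hn⟩ := iInf_lt_iff.mp this
    refine ⟨-(n : ℝ), fun s hs => ?_⟩
    by_contra hlt
    push_neg at hlt
    exact absurd (le_trans hs (measure_mono (Set.Iic_subset_Iic.2 hlt.le))) (not_le.2 hn)
  set a := sInf S with ha
  have haS : ENNReal.ofReal κ ≤ ν (Set.Iic a) := by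
    have hIic : Set.Iic a = ⋂ n : ℕ, Set.Iic (a + 1 / (n + 1)) := by
      ext x
      simp only [Set.mem_Iic, Set.mem_iInter]
      constructor
      · intro h n
        have hpos : (0 : ℝ) < 1 / (n + 1) := by positivity
        linarith
      · intro h
        by_contra hx
        push_neg at hx
        obtain ⟨n, hn⟩ := exists_nat_one_div_lt (sub_pos.2 hx)
        have := h n
        linarith
    have hanti : Antitone fun n : ℕ => Set.Iic (a + 1 / ((n : ℝ) + 1)) := by
      intro n k h
      refine Set.Iic_subset_Iic.2 (by gcongr)
    rw [hIic, hanti.measure_iInter (fun n => measurableSet_Iic.nullMeasurableSet) ⟨0, hνfin _⟩]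
    refine le_iInf fun n => ?_
    have hpos : (0 : ℝ) < 1 / ((n : ℝ) + 1) := by positivity
    obtain ⟨s, hsS, hs⟩ := exists_lt_of_csInf_lt hSne
      (show sInf S < a + 1 / ((n : ℝ) + 1) by rw [← ha]; linarith)
    exact le_trans hsS (measure_mono (Set.Iic_subset_Iic.2 hs.le))
  have hIioa : ν (Set.Iio a) ≤ ENNReal.ofReal κ := by
    have hIio : Set.Iio a = ⋃ n : ℕ, Set.Iic (a - 1 / (n + 1)) := by
      ext x
      simp only [Set.mem_Iio, Set.mem_iUnion, Set.mem_Iic]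
      constructor
      · intro h
        obtain ⟨n, hn⟩ := exists_nat_one_div_lt (sub_pos.2 h)
        exact ⟨n, by linarith⟩
      · rintro ⟨n, hn⟩
        have hpos : (0 : ℝ) < 1 / ((n : ℝ) + 1) := by positivity
        linarith
    have hmono : Monotone fun n : ℕ => Set.Iic (a - 1 / ((n : ℝ) + 1)) := by
      intro n k h
      refine Set.Iic_subset_Iic.2 (by gcongr)
    rw [hIio, hmono.measure_iUnion]
    refine iSup_le fun n => ?_
    by_contra hlt
    push_neg at hlt
    have hmem : a - 1 / ((n : ℝ) + 1) ∈ S := hlt.le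
    have := csInf_le hSbdd hmem
    have hpos : (0 : ℝ) < 1 / ((n : ℝ) + 1) := by positivity
    rw [← ha] at this
    linarith
  -- the upper quantile
  set T : Set ℝ := {t | ENNReal.ofReal κ ≤ ν (Set.Ici t)} with hT
  have hTne : T.Nonempty := by
    obtain ⟨t, ht⟩ := ((tendsto_measure_Ici_atBot ν).eventually_const_lt
      (hνuniv ▸ hκm)).exists
    exact ⟨t, ht.le⟩
  have hTbdd : BddAbove T := by
    have hempty : (⋂ n : ℕ, Set.Ici ((n : ℝ))) = ∅ := by
      ext x
      simp only [Set.mem_iInter, Set.mem_Ici, Set.mem_empty_iff_false, iff_false, not_forall]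
      obtain ⟨n, hn⟩ := exists_nat_gt x
      exact ⟨n, by push_neg; linarith⟩
    have hanti : Antitone fun n : ℕ => Set.Ici ((n : ℝ)) := fun n k h =>
      Set.Ici_subset_Ici.2 (by exact_mod_cast h)
    have h0 : (⨅ n : ℕ, ν (Set.Ici ((n : ℝ)))) = 0 := by
      rw [← hanti.measure_iInter (fun n => measurableSet_Ici.nullMeasurableSet)
        ⟨0, hνfin _⟩, hempty, measure_empty]
    have : (⨅ n : ℕ, ν (Set.Ici ((n : ℝ)))) < ENNReal.ofReal κ := by
      rw [h0]; exact ENNReal.ofReal_pos.2 hκ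
    obtain ⟨n, hn⟩ := iInf_lt_iff.mp this
    refine ⟨(n : ℝ), fun s hs => ?_⟩
    by_contra hlt
    push_neg at hlt
    exact absurd (le_trans hs (measure_mono (Set.Ici_subset_Ici.2 hlt.le))) (not_le.2 hn)
  set b := sSup T with hb
  have hbT : ENNReal.ofReal κ ≤ ν (Set.Ici b) := by
    have hIci : Set.Ici b = ⋂ n : ℕ, Set.Ici (b - 1 / (n + 1)) := by
      ext x
      simp only [Set.mem_Ici, Set.mem_iInter]
      constructor
      · intro h n
        have hpos : (0 : ℝ) < 1 / ((n : ℝ) + 1) := by positivity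
        linarith
      · intro h
        by_contra hx
        push_neg at hx
        obtain ⟨n, hn⟩ := exists_nat_one_div_lt (sub_pos.2 hx)
        have := h n
        linarith
    have hanti : Antitone fun n : ℕ => Set.Ici (b - 1 / ((n : ℝ) + 1)) := by
      intro n k h
      refine Set.Ici_subset_Ici.2 (by gcongr)
    rw [hIci, hanti.measure_iInter (fun n => measurableSet_Ici.nullMeasurableSet) ⟨0, hνfin _⟩]
    refine le_iInf fun n => ?_
    have hpos : (0 : ℝ) < 1 / ((n : ℝ) + 1) := by positivity
    obtain ⟨s, hsT, hs⟩ := exists_lt_of_lt_csSup hTne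
      (show b - 1 / ((n : ℝ) + 1) < sSup T by rw [← hb]; linarith)
    exact le_trans hsT (measure_mono (Set.Ici_subset_Ici.2 hs.le))
  have hIoib : ν (Set.Ioi b) ≤ ENNReal.ofReal κ := by
    have hIoi : Set.Ioi b = ⋃ n : ℕ, Set.Ici (b + 1 / (n + 1)) := by
      ext x
      simp only [Set.mem_Ioi, Set.mem_iUnion, Set.mem_Ici]
      constructor
      · intro h
        obtain ⟨n, hn⟩ := exists_nat_one_div_lt (sub_pos.2 h)
        exact ⟨n, by linarith⟩
      · rintro ⟨n, hn⟩
        have hpos : (0 : ℝ) < 1 / ((n : ℝ) + 1) := by positivity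
        linarith
    have hmono : Monotone fun n : ℕ => Set.Ici (b + 1 / ((n : ℝ) + 1)) := by
      intro n k h
      refine Set.Ici_subset_Ici.2 (by gcongr)
    rw [hIoi, hmono.measure_iUnion]
    refine iSup_le fun n => ?_
    by_contra hlt
    push_neg at hlt
    have hmem : b + 1 / ((n : ℝ) + 1) ∈ T := hlt.le
    have := le_csSup hTbdd hmem
    have hpos : (0 : ℝ) < 1 / ((n : ℝ) + 1) := by positivity
    rw [← hb] at this
    linarith
  -- a ≤ b
  have hκκ : ENNReal.ofReal κ + ENNReal.ofReal κ = ENNReal.ofReal (2 * κ) := by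
    rw [two_mul, ENNReal.ofReal_add hκ.le hκ.le]
  have hab : a ≤ b := by
    by_contra h
    push_neg at h
    have h1 : m ≤ ν (Set.Iio a) + ν (Set.Ici a) := by
      have := measure_union_le (μ := ν) (Set.Iio a) (Set.Ici a)
      rwa [Set.Iio_union_Ici, hνuniv] at this
    have h2 : ν (Set.Ici a) ≤ ν (Set.Ioi b) := measure_mono (Set.Ici_subset_Ioi.2 h)
    have : m ≤ ENNReal.ofReal (2 * κ) := by
      calc m ≤ ν (Set.Iio a) + ν (Set.Ici a) := h1
        _ ≤ ENNReal.ofReal κ + ENNReal.ofReal κ := add_le_add hIioa (h2.trans hIoib)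
        _ = ENNReal.ofReal (2 * κ) := hκκ
    exact absurd this (not_le.2 hsmall)
  -- Icc a b has large measure
  have hIcc : m - ENNReal.ofReal (2 * κ) ≤ ν (Set.Icc a b) := by
    rw [tsub_le_iff_right]
    have hcover : (Set.univ : Set ℝ) ⊆ Set.Iio a ∪ Set.Icc a b ∪ Set.Ioi b := by
      intro x _
      rcases lt_or_ge x a with h | h
      · exact Or.inl (Or.inl h)
      rcases le_or_gt x b with h' | h'
      · exact Or.inl (Or.inr ⟨h, h'⟩)
      · exact Or.inr h'
    calc m = ν Set.univ := hνuniv.symm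
      _ ≤ ν (Set.Iio a ∪ Set.Icc a b ∪ Set.Ioi b) := measure_mono hcover
      _ ≤ ν (Set.Iio a) + ν (Set.Icc a b) + ν (Set.Ioi b) :=
        le_trans (measure_union_le _ _) (add_le_add_left (measure_union_le _ _) _)
      _ ≤ ENNReal.ofReal κ + ν (Set.Icc a b) + ENNReal.ofReal κ := by
        gcongr
      _ = ν (Set.Icc a b) + ENNReal.ofReal (2 * κ) := by
        rw [← hκκ]; ring
  have hpd : partialDiam ν (m - ENNReal.ofReal (2 * κ)) ≤ ENNReal.ofReal (b - a) := by
    calc partialDiam ν (m - ENNReal.ofReal (2 * κ)) ≤ EMetric.diam (Set.Icc a b) :=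
        iInf_le_of_le (Set.Icc a b) (iInf_le_of_le measurableSet_Icc (iInf_le_of_le hIcc le_rfl))
      _ = ENNReal.ofReal (b - a) := Real.ediam_Icc a b
  refine hpd.trans ?_
  -- separation bound
  have hA : ENNReal.ofReal κ ≤ μ (f ⁻¹' Set.Iic a) := by
    rw [← hνs _ measurableSet_Iic]; exact haS
  have hB : ENNReal.ofReal κ ≤ μ (f ⁻¹' Set.Ici b) := by
    rw [← hνs _ measurableSet_Ici]; exact hbT
  have hdist : ENNReal.ofReal (b - a) ≤ setEDist (f ⁻¹' Set.Iic a) (f ⁻¹' Set.Ici b) := by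
    unfold setEDist
    refine le_iInf₂ fun x hx => le_iInf₂ fun y hy => ?_
    have h1 : edist (f x) (f y) ≤ edist x y := by simpa using hf.edist_le_mul x y
    refine le_trans (le_trans ?_ h1) le_rfl
    rw [edist_dist, Real.dist_eq]
    apply ENNReal.ofReal_le_ofReal
    have hxa : f x ≤ a := hx
    have hby : b ≤ f y := hy
    calc b - a ≤ f y - f x := by linarith
      _ ≤ |f x - f y| := by rw [abs_sub_comm]; exact le_abs_self _
  refine hdist.trans ?_
  unfold sep
  exact le_iSup₂_of_le (f ⁻¹' Set.Iic a) (f ⁻¹' Set.Ici b)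
    (le_iSup₂_of_le (hfm measurableSet_Iic) (hfm measurableSet_Ici)
      (le_iSup₂_of_le hA hB le_rfl))
end

section
/- Let Y be a metric space, ε > 0, and let S ⊆ Y be an ε-separated set such that every point ξ ∈ S satisfies Card{ η ∈ S : d_Y(ξ, η) < 5ε } ≤ k for a fixed k ∈ ℕ. Then S can be written as a union S = J₁ ∪ J₂ ∪ ⋯ ∪ J_k of k pairwise disjoint subsets, each of which is 5ε-separated (i.e., any two distinct points of J_i are at distance at least 5ε). -/
open Metric

lemma greedy_coloring {V : Type*} (G : SimpleGraph V) (k : ℕ) (hk : 0 < k)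
    (hdeg : ∀ v : V, ({w | G.Adj v w}).encard + 1 ≤ (k : ℕ∞))
    {A : Set V} (hA : A.Finite) :
    ∃ c : V → Fin k, ∀ x ∈ A, ∀ y ∈ A, G.Adj x y → c x ≠ c y := by
  classical
  refine Set.Finite.induction_on A hA (motive := fun A _ => ∃ c : V → Fin k, ∀ x ∈ A, ∀ y ∈ A, G.Adj x y → c x ≠ c y) ⟨fun _ => ⟨0, hk⟩, by simp⟩ ?_
  intro a A' haA' hA'fin ih
  obtain ⟨c', hc'⟩ := ih
  set used : Set (Fin k) := c' '' {y ∈ A' | G.Adj a y} with hused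
  have hne : ({w | G.Adj a w}).encard ≠ ⊤ := by
    intro h
    have h1 := hdeg a
    rw [h] at h1
    simp at h1
  have hnb : ({w | G.Adj a w}).encard < (k : ℕ∞) :=
    (ENat.add_one_le_iff hne).mp (hdeg a)
  have husedlt : used.encard < (k : ℕ∞) := by
    calc used.encard ≤ ({y ∈ A' | G.Adj a y}).encard := Set.encard_image_le _ _
      _ ≤ ({w | G.Adj a w}).encard :=
        Set.encard_le_encard (fun y hy => hy.2)
      _ < (k : ℕ∞) := hnb
  have : ∃ i : Fin k, i ∉ used := by
    by_contra h
    push_neg at h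
    have : used = Set.univ := Set.eq_univ_of_forall h
    rw [this, Set.encard_univ] at husedlt
    simp [ENat.card_eq_coe_fintype_card] at husedlt
  obtain ⟨i, hi⟩ := this
  refine ⟨Function.update c' a i, ?_⟩
  intro x hx y hy hadj
  have hxy : x ≠ y := G.ne_of_adj hadj
  rcases Set.mem_insert_iff.mp hx with rfl | hx' <;>
    rcases Set.mem_insert_iff.mp hy with rfl | hy'
  · exact absurd rfl hxy
  · rw [Function.update_self, Function.update_of_ne (ne_of_mem_of_not_mem hy' haA')]
    intro h
    exact hi ⟨y, ⟨hy', hadj⟩, h.symm⟩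
  · rw [Function.update_self, Function.update_of_ne (ne_of_mem_of_not_mem hx' haA')]
    intro h
    exact hi ⟨x, ⟨hx', hadj.symm⟩, h⟩
  · rw [Function.update_of_ne (ne_of_mem_of_not_mem hx' haA'),
      Function.update_of_ne (ne_of_mem_of_not_mem hy' haA')]
    exact hc' x hx' y hy' hadj

/-- An `ε`-separated set `S` in which every point has at most `k` points of `S`
(itself included) within distance `< 5ε` can be partitioned into `k` pairwise disjoint
`5ε`-separated subsets. -/
theorem separated_set_partition
    {Y : Type*} [MetricSpace Y] (ε : ℝ) (hε : 0 < ε) (k : ℕ)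
    (S : Set Y) (hS : ∀ s ∈ S, ∀ s' ∈ S, s ≠ s' → ε ≤ dist s s')
    (hcard : ∀ ξ ∈ S, ({η ∈ S | dist ξ η < 5 * ε}).encard ≤ (k : ℕ∞)) :
    ∃ J : Fin k → Set Y,
      (⋃ i, J i) = S ∧
      Pairwise (Function.onFun Disjoint J) ∧
      ∀ i : Fin k, ∀ a ∈ J i, ∀ b ∈ J i, a ≠ b → 5 * ε ≤ dist a b := by
  classical
  rcases Nat.eq_zero_or_pos k with rfl | hk
  · -- k = 0 : S must be empty
    have hempty : S = ∅ := by
      by_contra h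
      obtain ⟨ξ, hξ⟩ := Set.nonempty_iff_ne_empty.mpr h
      have h1 : ({η ∈ S | dist ξ η < 5 * ε}).encard ≤ 0 := by
        simpa using hcard ξ hξ
      have hmem : ξ ∈ {η ∈ S | dist ξ η < 5 * ε} := ⟨hξ, by rw [dist_self]; positivity⟩
      have h2 := Set.one_le_encard_iff_nonempty.mpr ⟨ξ, hmem⟩
      exact absurd (le_trans h2 h1) (by simp)
    exact ⟨fun i => ∅, by simp [hempty], fun i j h => by simp [Function.onFun],
      fun i => i.elim0⟩
  · -- define the proximity graph on ↥S
    set G : SimpleGraph ↥S :=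
      { Adj := fun x y => x ≠ y ∧ dist (x : Y) (y : Y) < 5 * ε
        symm := ⟨fun x y h => ⟨h.1.symm, by rw [dist_comm]; exact h.2⟩⟩
        loopless := ⟨fun x h => h.1 rfl⟩ } with hG
    have hdeg : ∀ v : ↥S, ({w | G.Adj v w}).encard + 1 ≤ (k : ℕ∞) := by
      intro v
      have himg : (Subtype.val '' {w | G.Adj v w}).encard = ({w | G.Adj v w}).encard :=
        Set.InjOn.encard_image (Subtype.val_injective.injOn)
      have hsub : insert (v : Y) (Subtype.val '' {w | G.Adj v w}) ⊆
          {η ∈ S | dist (v : Y) η < 5 * ε} := by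
        rintro y (rfl | ⟨w, hw, rfl⟩)
        · exact ⟨v.2, by rw [dist_self]; positivity⟩
        · exact ⟨w.2, hw.2⟩
      have hnmem : (v : Y) ∉ Subtype.val '' {w | G.Adj v w} := by
        rintro ⟨w, hw, hwv⟩
        exact hw.1 (Subtype.val_injective hwv).symm
      calc ({w | G.Adj v w}).encard + 1
          = (insert (v : Y) (Subtype.val '' {w | G.Adj v w})).encard := by
            rw [Set.encard_insert_of_notMem hnmem, himg]
        _ ≤ ({η ∈ S | dist (v : Y) η < 5 * ε}).encard := Set.encard_le_encard hsub
        _ ≤ (k : ℕ∞) := hcard v v.2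
    have hcol : Nonempty (G →g (⊤ : SimpleGraph (Fin k))) := by
      apply SimpleGraph.nonempty_hom_of_forall_finite_subgraph_hom
      intro G' hG'
      have hex := greedy_coloring G k hk hdeg hG'
      let c := hex.choose
      have hc := hex.choose_spec
      exact ⟨fun v => c v, by
        intro a b hab
        have hadj : G.Adj a b := G'.adj_sub hab
        exact hc ↑a a.2 ↑b b.2 hadj⟩
    obtain ⟨C⟩ := hcol
    refine ⟨fun i => {y : Y | ∃ h : y ∈ S, C ⟨y, h⟩ = i}, ?_, ?_, ?_⟩
    · ext y
      simp only [Set.mem_iUnion, Set.mem_setOf_eq]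
      constructor
      · rintro ⟨i, h, _⟩; exact h
      · intro h; exact ⟨C ⟨y, h⟩, h, rfl⟩
    · intro i j hij
      rw [Function.onFun, Set.disjoint_left]
      rintro y ⟨h1, h2⟩ ⟨h3, h4⟩
      exact hij (h2 ▸ h4 ▸ rfl)
    · rintro i a ⟨ha, hai⟩ b ⟨hb, hbi⟩ hab
      by_contra h
      push_neg at h
      have hadj : G.Adj ⟨a, ha⟩ ⟨b, hb⟩ := ⟨fun he => hab (congrArg Subtype.val he), h⟩
      have := C.map_rel hadj
      rw [hai, hbi] at this
      exact this.ne rfl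
end
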